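/- (Theorem 1, transmit side via the reciprocal channel, high-SNR limit.) Let M = 2d, let H_{kl} ∈ ℂ^{M×M}, and let V_k, U_k ∈ ℂ^{M×d} satisfy the interference alignment condition: U_k^H H_{kl} V_l = 0 for all l ≠ k and rank(U_k^H H_{kk} V_k) = d for all k. Let U'_k = [u'_k^{(1)},…,u'_k^{(d)}] ∈ ℂ^{M×d} be matrices of rank d with unit-norm columns whose column space equals that of U_k. Fix l and set Z̄_l = Σ_{k≠l} H_{kl}^H U'_k U'_k{}^H H_{kl}, and assume rank(Z̄_l) = d. For each m = 1,…,d set W̄_{l,m} = Z̄_l + Σ_{j≠m} H_{ll}^H u'_l^{(j)} u'_l^{(j)H} H_{ll} and assume Π_{W̄_{l,m}} H_{ll}^H u'_l^{(m)} ≠ 0. Then the normalized vector (I + t W̄_{l,m})^{-1} H_{ll}^H u'_l^{(m)} / ‖(I + t W̄_{l,m})^{-1} H_{ll}^H u'_l^{(m)}‖ converges as t → ∞ to a unit vector lying in the column space of V_l. -/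

import Mathlib

/-!
By the spectral theorem, `(1 + t W)⁻¹` tends, as `t → ∞`, to the orthogonal projection onto
`ker W` for every positive semidefinite `W`. Hence the normalized filter tends to
`Π h / ‖Π h‖`, where `h = H_llᴴ u'_l^{(m)}`, `Π` projects onto `ker W̄_{l,m}` and `Π h ≠ 0`.
As `W̄_{l,m} = Z̄_l + (positive semidefinite)`, its kernel lies in `ker Z̄_l`. Interference
alignment, transported from `U_k` to `U'_k` through their common column space, gives
`Z̄_l V_l = 0`; since `rank V_l = d = 2d - rank Z̄_l`, the column space of `V_l` is exactly
`ker Z̄_l`.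
-/

open Matrix Filter
open scoped ComplexOrder

/-- The Euclidean (2-)norm of a vector in `ℂ^M`. -/
noncomputable def euclNorm {M : ℕ} (v : Fin M → ℂ) : ℝ :=
  Real.sqrt (∑ i, ‖v i‖ ^ 2)

open Topology

lemma euclNorm_eq_norm_toLp {M : ℕ} (v : Fin M → ℂ) :
    euclNorm v = ‖WithLp.toLp 2 v‖ :=
  (EuclideanSpace.norm_eq _).symm

lemma euclNorm_inv_smul_self {M : ℕ} {p : Fin M → ℂ} (hp : p ≠ 0) :
    euclNorm ((euclNorm p)⁻¹ • p) = 1 := by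
  simp only [euclNorm_eq_norm_toLp, WithLp.toLp_smul, norm_smul, norm_inv, norm_norm]
  exact inv_mul_cancel₀ (by simpa using hp)

lemma tendsto_euclNorm_inv_smul {α : Type*} {l : Filter α} {M : ℕ} {f : α → Fin M → ℂ}
    {p : Fin M → ℂ} (hf : Tendsto f l (𝓝 p)) (hp : p ≠ 0) :
    Tendsto (fun x => (euclNorm (f x))⁻¹ • f x) l (𝓝 ((euclNorm p)⁻¹ • p)) := by
  have hcont : Continuous fun v : Fin M → ℂ => euclNorm v := by
    simp only [euclNorm_eq_norm_toLp]
    fun_prop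
  have hpos : euclNorm p ≠ 0 := by simpa [euclNorm_eq_norm_toLp] using hp
  exact (((hcont.tendsto p).comp hf).inv₀ hpos).smul hf

lemma tendsto_inv_one_add_mul_atTop {μ : ℝ} (hμ : 0 ≤ μ) :
    Tendsto (fun t : ℝ => (1 + t * μ)⁻¹) atTop (𝓝 (if μ = 0 then 1 else 0)) := by
  rcases hμ.eq_or_lt with rfl | hpos
  · simp
  · rw [if_neg hpos.ne']
    exact (tendsto_atTop_add_const_left _ 1 (tendsto_id.atTop_mul_const hpos)).inv_tendsto_atTop

namespace Matrix

lemma exists_eq_mul_of_range_mulVecLin_le {m n n' R : Type*} [Fintype n] [Fintype n']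
    [DecidableEq n'] [CommSemiring R] {B : Matrix m n R} {B' : Matrix m n' R}
    (h : LinearMap.range B'.mulVecLin ≤ LinearMap.range B.mulVecLin) :
    ∃ C : Matrix n n' R, B' = B * C := by
  choose c hc using fun j => h (LinearMap.mem_range_self _ (Pi.single j 1))
  refine ⟨of fun i j => c j i, ?_⟩
  ext i j
  have := congrFun (hc j) i
  simp only [mulVecLin_apply, mulVec_single_one] at this
  exact this.symm

lemma range_mulVecLin_eq_ker_of_mul_eq_zero {m n o K : Type*} [Fintype m] [Fintype n]
    [Field K] {Z : Matrix o n K} {V : Matrix n m K} (hZV : Z * V = 0)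
    (hrank : V.rank + Z.rank = Fintype.card n) :
    LinearMap.range V.mulVecLin = LinearMap.ker Z.mulVecLin := by
  refine Submodule.eq_of_le_of_finrank_eq ?_ ?_
  · rintro _ ⟨c, rfl⟩
    simp [mulVec_mulVec, hZV]
  · have := LinearMap.finrank_range_add_finrank_ker Z.mulVecLin
    rw [Module.finrank_fintype_fun_eq_card] at this
    unfold rank at hrank
    omega

lemma IsHermitian.dotProduct_mulVec_eq_zero {n R : Type*} [Fintype n] [CommSemiring R]
    [StarRing R] {W : Matrix n n R} (hW : W.IsHermitian) {y : n → R} (hy : W *ᵥ y = 0)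
    (z : n → R) : star y ⬝ᵥ (W *ᵥ z) = 0 := by
  rw [dotProduct_mulVec, ← hW.eq, ← star_mulVec, hy, star_zero, zero_dotProduct]

variable {𝕜 n : Type*} [RCLike 𝕜] [Fintype n]

/-- Uniqueness of the orthogonal projection onto `ker W`: `h - q` lies in `range W`, which is
orthogonal to `ker W`. -/
lemma IsHermitian.eq_of_sub_eq_mulVec {W : Matrix n n 𝕜} (hW : W.IsHermitian)
    {h p q z : n → 𝕜} (hp : W *ᵥ p = 0) (hhp : ∀ y, W *ᵥ y = 0 → star y ⬝ᵥ (h - p) = 0)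
    (hq : W *ᵥ q = 0) (hhq : h - q = W *ᵥ z) : q = p := by
  have hr : W *ᵥ (q - p) = 0 := by rw [mulVec_sub, hp, hq, sub_zero]
  have : star (q - p) ⬝ᵥ (q - p) = 0 :=
    calc star (q - p) ⬝ᵥ (q - p) = star (q - p) ⬝ᵥ (h - p) - star (q - p) ⬝ᵥ (h - q) := by
          rw [← dotProduct_sub, sub_sub_sub_cancel_left]
      _ = 0 := by rw [hhp _ hr, hhq, hW.dotProduct_mulVec_eq_zero hr, sub_zero]
  exact sub_eq_zero.mp (dotProduct_star_self_eq_zero.mp this)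

lemma PosSemidef.mulVec_eq_zero_of_add_mulVec_eq_zero {A B : Matrix n n 𝕜} (hA : A.PosSemidef)
    (hB : B.PosSemidef) {x : n → 𝕜} (h : (A + B) *ᵥ x = 0) : A *ᵥ x = 0 := by
  have hsum : star x ⬝ᵥ (A *ᵥ x) + star x ⬝ᵥ (B *ᵥ x) = 0 := by
    rw [← dotProduct_add, ← add_mulVec, h, dotProduct_zero]
  have hA0 := hA.dotProduct_mulVec_nonneg x
  have hB0 := hB.dotProduct_mulVec_nonneg x
  exact (hA.dotProduct_mulVec_zero_iff x).mp
    (le_antisymm ((le_add_of_nonneg_right hB0).trans_eq hsum) hA0)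

variable [DecidableEq n]

lemma PosSemidef.inv_one_add_smul {W : Matrix n n 𝕜} (hW : W.PosSemidef) {t : ℝ}
    (ht : 0 ≤ t) :
    (1 + t • W)⁻¹ = Unitary.conjStarAlgAut 𝕜 _ hW.1.eigenvectorUnitary
      (diagonal (RCLike.ofReal ∘ fun i => (1 + t * hW.1.eigenvalues i)⁻¹)) := by
  set conj := Unitary.conjStarAlgAut 𝕜 _ hW.1.eigenvectorUnitary
  have hpos : ∀ i, 0 < 1 + t * hW.1.eigenvalues i := fun i => by
    nlinarith [hW.eigenvalues_nonneg i]
  have hone :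
      1 + t • W = conj (diagonal (RCLike.ofReal ∘ fun i => 1 + t * hW.1.eigenvalues i)) := by
    conv_lhs => rw [hW.1.spectral_theorem]
    rw [RCLike.real_smul_eq_coe_smul (K := 𝕜), ← map_smul, ← map_one conj, ← map_add]
    congr 1
    ext i j
    by_cases hij : i = j <;> simp [hij]
  refine inv_eq_right_inv ?_
  rw [hone, ← map_mul, diagonal_mul_diagonal, ← map_one conj, ← diagonal_one]
  congr 2
  ext i
  simp only [Function.comp_apply, ← RCLike.ofReal_mul, mul_inv_cancel₀ (hpos i).ne',
    RCLike.ofReal_one]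

lemma PosSemidef.exists_tendsto_inv_one_add_smul {W : Matrix n n 𝕜} (hW : W.PosSemidef) :
    ∃ Q R : Matrix n n 𝕜, Tendsto (fun t : ℝ => (1 + t • W)⁻¹) atTop (𝓝 Q) ∧
      W * Q = 0 ∧ 1 - Q = W * R := by
  set conj := Unitary.conjStarAlgAut 𝕜 _ hW.1.eigenvectorUnitary
  set μ := hW.1.eigenvalues
  have hW_eq : W = conj (diagonal (RCLike.ofReal ∘ μ)) := hW.1.spectral_theorem
  -- In the eigenbasis of `W`, `Q` is the indicator of the zero eigenvalues (the projection onto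
  -- `ker W`) and `R` is the pseudo-inverse, using `0⁻¹ = 0`.
  refine ⟨conj (diagonal (RCLike.ofReal ∘ fun i => if μ i = 0 then 1 else 0)),
    conj (diagonal (RCLike.ofReal ∘ fun i => (μ i)⁻¹)), ?_, ?_, ?_⟩
  · have hdiag := ((continuous_id (X := n → 𝕜)).matrix_diagonal.tendsto _).comp <|
      tendsto_pi_nhds.2 fun i => (RCLike.continuous_ofReal.tendsto _).comp
        (tendsto_inv_one_add_mul_atTop (hW.eigenvalues_nonneg i))
    have hconj : Continuous conj := conj.toAlgEquiv.toLinearMap.continuous_of_finiteDimensional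
    refine ((hconj.tendsto _).comp hdiag).congr' ?_
    filter_upwards [eventually_ge_atTop 0] with t ht
    exact (hW.inv_one_add_smul ht).symm
  · rw [hW_eq, ← map_mul, diagonal_mul_diagonal, ← map_zero conj, ← diagonal_zero]
    congr 2
    ext i
    by_cases h : μ i = 0 <;> simp [h]
  · rw [hW_eq, ← map_mul, diagonal_mul_diagonal, ← map_one conj, ← map_sub, ← diagonal_one,
      diagonal_sub]
    congr 2
    ext i
    by_cases h : μ i = 0 <;> simp [h]

lemma PosSemidef.tendsto_inv_one_add_smul_mulVec {W : Matrix n n 𝕜} (hW : W.PosSemidef)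
    {h p : n → 𝕜} (hp : W *ᵥ p = 0) (hhp : ∀ y, W *ᵥ y = 0 → star y ⬝ᵥ (h - p) = 0) :
    Tendsto (fun t : ℝ => (1 + t • W)⁻¹ *ᵥ h) atTop (𝓝 p) := by
  obtain ⟨Q, R, hQ, hWQ, hQR⟩ := hW.exists_tendsto_inv_one_add_smul
  have hQh : Q *ᵥ h = p :=
    hW.1.eq_of_sub_eq_mulVec (z := R *ᵥ h) hp hhp (by rw [mulVec_mulVec, hWQ, zero_mulVec])
      (by rw [mulVec_mulVec, ← hQR, sub_mulVec, one_mulVec])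
  rw [← hQh]
  exact ((continuous_id.matrix_mulVec continuous_const).tendsto Q).comp hQ

end Matrix

theorem maxSINR_transmit_filters_align_general
    {K d : ℕ}
    (H : Fin K → Fin K → Matrix (Fin (2 * d)) (Fin (2 * d)) ℂ)
    (V U : Fin K → Matrix (Fin (2 * d)) (Fin d) ℂ)
    (hIA1 : ∀ k l : Fin K, l ≠ k → (U k)ᴴ * H k l * V l = 0)
    (hIA2 : ∀ k : Fin K, ((U k)ᴴ * H k k * V k).rank = d)
    (U' : Fin K → Matrix (Fin (2 * d)) (Fin d) ℂ)
    (hU'span : ∀ k, LinearMap.range (U' k).mulVecLin = LinearMap.range (U k).mulVecLin)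
    (l : Fin K)
    (Zbar : Matrix (Fin (2 * d)) (Fin (2 * d)) ℂ)
    (hZbar : Zbar = ∑ k ∈ Finset.univ.filter (· ≠ l), (H k l)ᴴ * U' k * (U' k)ᴴ * H k l)
    (hZrank : Zbar.rank = d)
    (hu : Fin d → (Fin (2 * d) → ℂ))
    (Wbar : Fin d → Matrix (Fin (2 * d)) (Fin (2 * d)) ℂ)
    (hWbar : ∀ m, Wbar m = Zbar + ∑ j ∈ Finset.univ.filter (· ≠ m),
        vecMulVec (hu j) (star (hu j)))
    (P : Fin d → Matrix (Fin (2 * d)) (Fin (2 * d)) ℂ)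
    (hP1 : ∀ m (x : Fin (2 * d) → ℂ), (Wbar m).mulVec ((P m).mulVec x) = 0)
    (hP2 : ∀ m (x y : Fin (2 * d) → ℂ),
        (Wbar m).mulVec y = 0 → star y ⬝ᵥ (x - (P m).mulVec x) = 0)
    (hPh : ∀ m, (P m).mulVec (hu m) ≠ 0) :
    ∀ m : Fin d, ∃ vlim : Fin (2 * d) → ℂ,
      Tendsto
        (fun t : ℝ =>
          (euclNorm ((1 + (t : ℂ) • Wbar m)⁻¹.mulVec (hu m)))⁻¹ •
            ((1 + (t : ℂ) • Wbar m)⁻¹.mulVec (hu m)))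
        atTop (nhds vlim) ∧
      euclNorm vlim = 1 ∧
      vlim ∈ LinearMap.range (V l).mulVecLin := by
  intro m
  have hVrank : (V l).rank = d :=
    le_antisymm (rank_le_width _) ((hIA2 l).symm.trans_le (rank_mul_le_right _ _))
  have hZV : Zbar * V l = 0 := by
    rw [hZbar, Matrix.sum_mul]
    refine Finset.sum_eq_zero fun k hk => ?_
    obtain ⟨C, hC⟩ := exists_eq_mul_of_range_mulVecLin_le (hU'span k).le
    have hUHV := hIA1 k l (Finset.mem_filter.mp hk).2.symm
    simp only [Matrix.mul_assoc] at hUHV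
    simp only [hC, conjTranspose_mul, Matrix.mul_assoc, hUHV, Matrix.mul_zero]
  have hrange : LinearMap.range (V l).mulVecLin = LinearMap.ker Zbar.mulVecLin :=
    range_mulVecLin_eq_ker_of_mul_eq_zero hZV <| by
      simp only [hVrank, hZrank, Fintype.card_fin]; omega
  have hZ : Zbar.PosSemidef := hZbar ▸ posSemidef_sum _ fun k _ => by
    simpa only [conjTranspose_mul, conjTranspose_conjTranspose, Matrix.mul_assoc] using
      posSemidef_conjTranspose_mul_self ((U' k)ᴴ * H k l)
  have hS := posSemidef_sum (Finset.univ.filter (· ≠ m)) fun j _ =>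
    posSemidef_vecMulVec_self_star (hu j)
  have hW : (Wbar m).PosSemidef := hWbar m ▸ hZ.add hS
  have hmem : (P m).mulVec (hu m) ∈ LinearMap.range (V l).mulVecLin := by
    rw [hrange]
    exact hZ.mulVec_eq_zero_of_add_mulVec_eq_zero hS (hWbar m ▸ hP1 m (hu m))
  have hlim := hW.tendsto_inv_one_add_smul_mulVec (hP1 m (hu m)) (hP2 m (hu m))
  refine ⟨_, ?_, euclNorm_inv_smul_self (hPh m), Submodule.smul_of_tower_mem _ _ hmem⟩
  simpa only [Complex.coe_smul] using tendsto_euclNorm_inv_smul hlim (hPh m)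

/-- Theorem 1, transmit side via the reciprocal channel, high-SNR limit: with `M = 2d`,
interference alignment, receive matrices `U'` of rank `d` with unit-norm columns spanning
the same subspaces as `U`, and reciprocal interference covariance `Z̄_l` of rank `d`,
the normalized reciprocal max-SINR filter
`(I + t W̄_{l,m})⁻¹ H_{ll}ᴴ u'_l^{(m)} / ‖·‖` converges as `t → ∞` to a unit vector in
the column space of `V l`.  Here `P m` is the matrix of the orthogonal projection onto
`ker (W̄ m)`. -/
theorem maxSINR_transmit_filters_align
    {K d : ℕ}
    (H : Fin K → Fin K → Matrix (Fin (2 * d)) (Fin (2 * d)) ℂ)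
    (V U : Fin K → Matrix (Fin (2 * d)) (Fin d) ℂ)
    (hIA1 : ∀ k l : Fin K, l ≠ k → (U k)ᴴ * H k l * V l = 0)
    (hIA2 : ∀ k : Fin K, ((U k)ᴴ * H k k * V k).rank = d)
    (U' : Fin K → Matrix (Fin (2 * d)) (Fin d) ℂ)
    (hU'rank : ∀ k, (U' k).rank = d)
    (hU'unit : ∀ k m, euclNorm (fun i => U' k i m) = 1)
    (hU'span : ∀ k, LinearMap.range (U' k).mulVecLin = LinearMap.range (U k).mulVecLin)
    (l : Fin K)
    (Zbar : Matrix (Fin (2 * d)) (Fin (2 * d)) ℂ)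
    (hZbar : Zbar = ∑ k ∈ Finset.univ.filter (· ≠ l), (H k l)ᴴ * U' k * (U' k)ᴴ * H k l)
    (hZrank : Zbar.rank = d)
    (hu : Fin d → (Fin (2 * d) → ℂ))
    (hhu : ∀ m, hu m = (H l l)ᴴ.mulVec (fun i => U' l i m))
    (Wbar : Fin d → Matrix (Fin (2 * d)) (Fin (2 * d)) ℂ)
    (hWbar : ∀ m, Wbar m = Zbar + ∑ j ∈ Finset.univ.filter (· ≠ m),
        vecMulVec (hu j) (star (hu j)))
    (P : Fin d → Matrix (Fin (2 * d)) (Fin (2 * d)) ℂ)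
    (hP1 : ∀ m (x : Fin (2 * d) → ℂ), (Wbar m).mulVec ((P m).mulVec x) = 0)
    (hP2 : ∀ m (x y : Fin (2 * d) → ℂ),
        (Wbar m).mulVec y = 0 → star y ⬝ᵥ (x - (P m).mulVec x) = 0)
    (hPh : ∀ m, (P m).mulVec (hu m) ≠ 0) :
    ∀ m : Fin d, ∃ vlim : Fin (2 * d) → ℂ,
      Tendsto
        (fun t : ℝ =>
          (euclNorm ((1 + (t : ℂ) • Wbar m)⁻¹.mulVec (hu m)))⁻¹ •
            ((1 + (t : ℂ) • Wbar m)⁻¹.mulVec (hu m)))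
        atTop (nhds vlim) ∧
      euclNorm vlim = 1 ∧
      vlim ∈ LinearMap.range (V l).mulVecLin :=
  maxSINR_transmit_filters_align_general H V U hIA1 hIA2 U' hU'span l Zbar hZbar hZrank hu Wbar
    hWbar P hP1 hP2 hPh
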